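/- arXiv:2003.10227 — 5 statements merged into one kernel-verified Lean document; each statement's English description precedes it below -/
import Mathlib

section
/- Let t ∈ (0,1), 0 ≤ λ ≤ 1, 0 ≤ α < 1, and let Ψ₂ = 2−2α and Ψ₃ = (2−2α)(3−2α)/2. Suppose complex numbers a₂, a₃, c₁, c₂, d₁, d₂ with |c₁|,|c₂|,|d₁|,|d₂| ≤ 1 satisfy: (1+λ)Ψ₂a₂ = 2t·c₁; −(1+3λ)Ψ₂²a₂² + 2(1+2λ)Ψ₃a₃ = 2t·c₂ + (4t²−1)c₁²; −(1+λ)Ψ₂a₂ = 2t·d₁; and (4(1+2λ)Ψ₃ − (1+3λ)Ψ₂²)a₂² − 2(1+2λ)Ψ₃a₃ = 2t·d₂ + (4t²−1)d₁². If [2(1+2λ)Ψ₃ − (λ²+5λ+2)Ψ₂²]4t² + (1+λ)²Ψ₂² ≠ 0, then |a₂| ≤ 2t√(2t)/√(|[2(1+2λ)Ψ₃ − (λ²+5λ+2)Ψ₂²]4t² + (1+λ)²Ψ₂²|). -/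
theorem stmt_10 (t l α Ψ₂ Ψ₃ : ℝ) (ht : t ∈ Set.Ioo (0 : ℝ) 1)
    (hl0 : 0 ≤ l) (hl1 : l ≤ 1) (hα0 : 0 ≤ α) (hα1 : α < 1)
    (hΨ₂ : Ψ₂ = 2 - 2 * α) (hΨ₃ : Ψ₃ = (2 - 2 * α) * (3 - 2 * α) / 2)
    (a₂ a₃ c₁ c₂ d₁ d₂ : ℂ)
    (hc₁ : ‖c₁‖ ≤ 1) (hc₂ : ‖c₂‖ ≤ 1) (hd₁ : ‖d₁‖ ≤ 1) (hd₂ : ‖d₂‖ ≤ 1)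
    (e1 : ((1 + l) * Ψ₂ : ℝ) * a₂ = (2 * t : ℝ) * c₁)
    (e2 : -(((1 + 3 * l) * Ψ₂ ^ 2 : ℝ) : ℂ) * a₂ ^ 2 + ((2 * (1 + 2 * l) * Ψ₃ : ℝ) : ℂ) * a₃
        = (2 * t : ℝ) * c₂ + ((4 * t ^ 2 - 1 : ℝ) : ℂ) * c₁ ^ 2)
    (e3 : -(((1 + l) * Ψ₂ : ℝ) : ℂ) * a₂ = (2 * t : ℝ) * d₁)
    (e4 : ((4 * (1 + 2 * l) * Ψ₃ - (1 + 3 * l) * Ψ₂ ^ 2 : ℝ) : ℂ) * a₂ ^ 2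
        - ((2 * (1 + 2 * l) * Ψ₃ : ℝ) : ℂ) * a₃
        = (2 * t : ℝ) * d₂ + ((4 * t ^ 2 - 1 : ℝ) : ℂ) * d₁ ^ 2)
    (hden : (2 * (1 + 2 * l) * Ψ₃ - (l ^ 2 + 5 * l + 2) * Ψ₂ ^ 2) * (4 * t ^ 2)
        + (1 + l) ^ 2 * Ψ₂ ^ 2 ≠ 0) :
    ‖a₂‖ ≤ 2 * t * Real.sqrt (2 * t) /
      Real.sqrt |(2 * (1 + 2 * l) * Ψ₃ - (l ^ 2 + 5 * l + 2) * Ψ₂ ^ 2) * (4 * t ^ 2)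
        + (1 + l) ^ 2 * Ψ₂ ^ 2| := by
  obtain ⟨ht0, ht1⟩ := ht
  set D : ℝ := (2 * (1 + 2 * l) * Ψ₃ - (l ^ 2 + 5 * l + 2) * Ψ₂ ^ 2) * (4 * t ^ 2)
        + (1 + l) ^ 2 * Ψ₂ ^ 2 with hD
  push_cast at e1 e2 e3 e4
  have key : ((2 * D : ℝ) : ℂ) * a₂ ^ 2 = ((8 * t ^ 3 : ℝ) : ℂ) * (c₂ + d₂) := by
    push_cast [hD]
    linear_combination (4*t^2 : ℂ) * e2 + (4*t^2 : ℂ) * e4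
      - ((4*t^2-1) * (2*t*c₁ + (1+l)*Ψ₂*a₂) : ℂ) * e1
      + ((4*t^2-1) * ((1+l)*Ψ₂*a₂ - 2*t*d₁) : ℂ) * e3
  have hDpos : 0 < |D| := abs_pos.mpr hden
  have hnorm : 2 * |D| * ‖a₂‖ ^ 2 ≤ 16 * t ^ 3 := by
    have h1 : ‖((2 * D : ℝ) : ℂ) * a₂ ^ 2‖ = 2 * |D| * ‖a₂‖ ^ 2 := by
      rw [norm_mul, norm_pow, Complex.norm_real]
      rw [Real.norm_eq_abs, abs_mul, abs_two]
    have h2 : ‖((8 * t ^ 3 : ℝ) : ℂ) * (c₂ + d₂)‖ ≤ 16 * t ^ 3 := by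
      rw [norm_mul, Complex.norm_real, Real.norm_eq_abs,
        abs_of_pos (by positivity)]
      calc (8 * t ^ 3) * ‖c₂ + d₂‖ ≤ (8 * t ^ 3) * 2 := by
            have h := norm_add_le c₂ d₂
            have : ‖c₂ + d₂‖ ≤ 2 := by linarith
            nlinarith [pow_pos ht0 3]
        _ = 16 * t ^ 3 := by ring
    calc 2 * |D| * ‖a₂‖ ^ 2 = ‖((2 * D : ℝ) : ℂ) * a₂ ^ 2‖ := h1.symm
      _ = ‖((8 * t ^ 3 : ℝ) : ℂ) * (c₂ + d₂)‖ := by rw [key]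
      _ ≤ 16 * t ^ 3 := h2
  have hsq : ‖a₂‖ ^ 2 ≤ 8 * t ^ 3 / |D| := by
    rw [le_div_iff₀ hDpos]; nlinarith
  have h8 : (8 : ℝ) * t ^ 3 / |D| = (2 * t * Real.sqrt (2 * t) / Real.sqrt |D|) ^ 2 := by
    rw [div_pow, mul_pow, Real.sq_sqrt (by positivity : (0:ℝ) ≤ 2*t),
      Real.sq_sqrt (le_of_lt hDpos)]
    ring
  have := Real.sqrt_le_sqrt (h8 ▸ hsq)
  rwa [Real.sqrt_sq (norm_nonneg _), Real.sqrt_sq (by positivity)] at this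
end

section
/- Let t ∈ (0,1), 0 ≤ λ ≤ 1, 0 ≤ α < 1, Ψ₂ = 2−2α, Ψ₃ = (2−2α)(3−2α)/2. Suppose complex a₂, a₃, c₁, c₂, d₁, d₂ with |c₁|,|c₂|,|d₁|,|d₂| ≤ 1 satisfy the four coefficient equations: (1+λ)Ψ₂a₂ = 2t·c₁; −(1+3λ)Ψ₂²a₂² + 2(1+2λ)Ψ₃a₃ = 2t·c₂ + (4t²−1)c₁²; −(1+λ)Ψ₂a₂ = 2t·d₁; (4(1+2λ)Ψ₃ − (1+3λ)Ψ₂²)a₂² − 2(1+2λ)Ψ₃a₃ = 2t·d₂ + (4t²−1)d₁². Then |a₃| ≤ 4t²/((1+λ)²Ψ₂²) + t/((1+2λ)Ψ₃). -/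
theorem stmt_11 (t l α Ψ₂ Ψ₃ : ℝ) (ht : t ∈ Set.Ioo (0 : ℝ) 1)
    (hl0 : 0 ≤ l) (hl1 : l ≤ 1) (hα0 : 0 ≤ α) (hα1 : α < 1)
    (hΨ₂ : Ψ₂ = 2 - 2 * α) (hΨ₃ : Ψ₃ = (2 - 2 * α) * (3 - 2 * α) / 2)
    (a₂ a₃ c₁ c₂ d₁ d₂ : ℂ)
    (hc₁ : ‖c₁‖ ≤ 1) (hc₂ : ‖c₂‖ ≤ 1) (hd₁ : ‖d₁‖ ≤ 1) (hd₂ : ‖d₂‖ ≤ 1)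
    (e1 : ((1 + l) * Ψ₂ : ℝ) * a₂ = (2 * t : ℝ) * c₁)
    (e2 : -(((1 + 3 * l) * Ψ₂ ^ 2 : ℝ) : ℂ) * a₂ ^ 2 + ((2 * (1 + 2 * l) * Ψ₃ : ℝ) : ℂ) * a₃
        = (2 * t : ℝ) * c₂ + ((4 * t ^ 2 - 1 : ℝ) : ℂ) * c₁ ^ 2)
    (e3 : -(((1 + l) * Ψ₂ : ℝ) : ℂ) * a₂ = (2 * t : ℝ) * d₁)
    (e4 : ((4 * (1 + 2 * l) * Ψ₃ - (1 + 3 * l) * Ψ₂ ^ 2 : ℝ) : ℂ) * a₂ ^ 2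
        - ((2 * (1 + 2 * l) * Ψ₃ : ℝ) : ℂ) * a₃
        = (2 * t : ℝ) * d₂ + ((4 * t ^ 2 - 1 : ℝ) : ℂ) * d₁ ^ 2) :
    ‖a₃‖ ≤ 4 * t ^ 2 / ((1 + l) ^ 2 * Ψ₂ ^ 2) + t / ((1 + 2 * l) * Ψ₃) := by
  obtain ⟨ht0, ht1⟩ := ht
  have hΨ₂pos : 0 < Ψ₂ := by rw [hΨ₂]; linarith
  have hΨ₃pos : 0 < Ψ₃ := by rw [hΨ₃]; nlinarith
  have hK : 0 < (1 + l) * Ψ₂ := by positivity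
  have hB : 0 < (1 + 2 * l) * Ψ₃ := by positivity
  have ht2 : (2 * t : ℂ) ≠ 0 := by
    have : (2 * t : ℝ) ≠ 0 := by positivity
    exact_mod_cast this
  push_cast at e1 e2 e3 e4
  have hd : d₁ = -c₁ := by
    have h : (2 * t : ℂ) * (c₁ + d₁) = 0 := by linear_combination -e1 - e3
    have h' : c₁ + d₁ = 0 := by
      rcases mul_eq_zero.mp h with h' | h'
      · exact absurd h' ht2
      · exact h'
    linear_combination h'
  have hsq : c₁ ^ 2 = d₁ ^ 2 := by rw [hd]; ring
  have key : ((4 * (1 + 2 * l) * Ψ₃ : ℝ) : ℂ) * (a₃ - a₂ ^ 2)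
      = ((2 * t : ℝ) : ℂ) * (c₂ - d₂) := by
    push_cast
    linear_combination e2 - e4 + (4 * (t : ℂ) ^ 2 - 1) * hsq
  -- bound on ‖a₃ - a₂²‖
  have hnk : (4 * (1 + 2 * l) * Ψ₃) * ‖a₃ - a₂ ^ 2‖ = (2 * t) * ‖c₂ - d₂‖ := by
    have := congrArg norm key
    rwa [norm_mul, norm_mul, Complex.norm_real, Complex.norm_real,
      Real.norm_eq_abs, Real.norm_eq_abs,
      abs_of_pos (by positivity : (0:ℝ) < 4 * (1 + 2 * l) * Ψ₃),
      abs_of_pos (by positivity : (0:ℝ) < 2 * t)] at this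
  have h1 : ‖a₃ - a₂ ^ 2‖ ≤ t / ((1 + 2 * l) * Ψ₃) := by
    have hcd : ‖c₂ - d₂‖ ≤ 2 := by
      calc ‖c₂ - d₂‖ ≤ ‖c₂‖ + ‖d₂‖ := norm_sub_le _ _
        _ ≤ 2 := by linarith
    rw [le_div_iff₀ hB]
    nlinarith [norm_nonneg (a₃ - a₂ ^ 2)]
  -- bound on ‖a₂‖
  have e1' : ((((1 + l) * Ψ₂ : ℝ)) : ℂ) * a₂ = ((2 * t : ℝ) : ℂ) * c₁ := by
    push_cast; linear_combination e1
  have hnk2 : ((1 + l) * Ψ₂) * ‖a₂‖ = (2 * t) * ‖c₁‖ := by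
    have := congrArg norm e1'
    rwa [norm_mul, norm_mul, Complex.norm_real, Complex.norm_real,
      Real.norm_eq_abs, Real.norm_eq_abs,
      abs_of_pos hK, abs_of_pos (by positivity : (0:ℝ) < 2 * t)] at this
  have ha₂ : ‖a₂‖ ≤ 2 * t / ((1 + l) * Ψ₂) := by
    rw [le_div_iff₀ hK]
    nlinarith
  have ha₂sq : ‖a₂ ^ 2‖ ≤ 4 * t ^ 2 / ((1 + l) ^ 2 * Ψ₂ ^ 2) := by
    rw [norm_pow]
    have h2 : (2 * t / ((1 + l) * Ψ₂)) ^ 2 = 4 * t ^ 2 / ((1 + l) ^ 2 * Ψ₂ ^ 2) := by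
      field_simp; ring
    calc ‖a₂‖ ^ 2 ≤ (2 * t / ((1 + l) * Ψ₂)) ^ 2 := by
          apply pow_le_pow_left₀ (norm_nonneg _) ha₂
      _ = _ := h2
  calc ‖a₃‖ = ‖a₂ ^ 2 + (a₃ - a₂ ^ 2)‖ := by ring_nf
    _ ≤ ‖a₂ ^ 2‖ + ‖a₃ - a₂ ^ 2‖ := norm_add_le _ _
    _ ≤ _ := add_le_add ha₂sq h1
end

section
/- Let t ∈ (0,1), 0 ≤ λ ≤ 1, Ψ₂ = 2−2α, Ψ₃ = (2−2α)(3−2α)/2 with 0 ≤ α < 1, and suppose a₂, a₃ satisfy the four coefficient equations of the class R_Σ(λ,α,Φ(·,t)) with Schwarz coefficients |c₁|,|c₂|,|d₁|,|d₂| ≤ 1. Then |a₃ − a₂²| ≤ t/((1+2λ)Ψ₃). -/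
theorem stmt_14 (t l α Ψ₂ Ψ₃ : ℝ) (ht : t ∈ Set.Ioo (0 : ℝ) 1)
    (hl0 : 0 ≤ l) (hl1 : l ≤ 1) (hα0 : 0 ≤ α) (hα1 : α < 1)
    (hΨ₂ : Ψ₂ = 2 - 2 * α) (hΨ₃ : Ψ₃ = (2 - 2 * α) * (3 - 2 * α) / 2)
    (a₂ a₃ c₁ c₂ d₁ d₂ : ℂ)
    (hc₁ : ‖c₁‖ ≤ 1) (hc₂ : ‖c₂‖ ≤ 1) (hd₁ : ‖d₁‖ ≤ 1) (hd₂ : ‖d₂‖ ≤ 1)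
    (e1 : ((1 + l) * Ψ₂ : ℝ) * a₂ = (2 * t : ℝ) * c₁)
    (e2 : -(((1 + 3 * l) * Ψ₂ ^ 2 : ℝ) : ℂ) * a₂ ^ 2 + ((2 * (1 + 2 * l) * Ψ₃ : ℝ) : ℂ) * a₃
        = (2 * t : ℝ) * c₂ + ((4 * t ^ 2 - 1 : ℝ) : ℂ) * c₁ ^ 2)
    (e3 : -(((1 + l) * Ψ₂ : ℝ) : ℂ) * a₂ = (2 * t : ℝ) * d₁)
    (e4 : ((4 * (1 + 2 * l) * Ψ₃ - (1 + 3 * l) * Ψ₂ ^ 2 : ℝ) : ℂ) * a₂ ^ 2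
        - ((2 * (1 + 2 * l) * Ψ₃ : ℝ) : ℂ) * a₃
        = (2 * t : ℝ) * d₂ + ((4 * t ^ 2 - 1 : ℝ) : ℂ) * d₁ ^ 2) :
    ‖a₃ - a₂ ^ 2‖ ≤ t / ((1 + 2 * l) * Ψ₃) := by
  obtain ⟨ht0, ht1⟩ := ht
  have hK : (0 : ℝ) < (1 + 2 * l) * Ψ₃ := by
    apply mul_pos (by linarith)
    rw [hΨ₃]; nlinarith
  set K : ℝ := (1 + 2 * l) * Ψ₃ with hKdef
  have ht2 : ((2 * t : ℝ) : ℂ) ≠ 0 := by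
    simp only [ne_eq, Complex.ofReal_eq_zero]; positivity
  -- c₁ = -d₁
  have hcd : c₁ = -d₁ := by
    have h : ((2 * t : ℝ) : ℂ) * c₁ = ((2 * t : ℝ) : ℂ) * (-d₁) := by
      rw [← e1]; rw [mul_neg, ← e3]; ring
    exact mul_left_cancel₀ ht2 h
  -- subtract
  have key : ((4 * K : ℝ) : ℂ) * (a₃ - a₂ ^ 2) = ((2 * t : ℝ) : ℂ) * (c₂ - d₂) := by
    push_cast [hcd] at e2 e4 ⊢
    push_cast [hKdef]
    linear_combination e2 - e4
  have h4K : ((4 * K : ℝ) : ℂ) ≠ 0 := by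
    simp only [ne_eq, Complex.ofReal_eq_zero]; positivity
  have heq : a₃ - a₂ ^ 2 = ((2 * t : ℝ) : ℂ) * (c₂ - d₂) / ((4 * K : ℝ) : ℂ) := by
    rw [eq_div_iff h4K]
    linear_combination key
  rw [heq]
  rw [norm_div, norm_mul, Complex.norm_real, Complex.norm_real]
  rw [Real.norm_of_nonneg (by positivity), Real.norm_of_nonneg (by positivity)]
  have hcd2 : ‖c₂ - d₂‖ ≤ 2 := by
    calc ‖c₂ - d₂‖ ≤ ‖c₂‖ + ‖d₂‖ := norm_sub_le _ _
    _ ≤ 2 := by linarith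
  rw [div_le_div_iff₀ (by positivity) hK]
  nlinarith [mul_le_mul_of_nonneg_left hcd2 (le_of_lt (mul_pos (by linarith : (0:ℝ) < 2*t) hK)), hK.le]
end

section
/- Specializing α = 1/2 and λ = 0 (so Ψ₂ = 1, Ψ₃ = 1): if t ∈ (0,1) and a₂, a₃ ∈ ℂ satisfy a₂ = 2t·c₁, −a₂² + 2a₃ = 2t·c₂ + (4t²−1)c₁², −a₂ = 2t·d₁, and 3a₂² − 2a₃ = 2t·d₂ + (4t²−1)d₁² with |c₁|,|c₂|,|d₁|,|d₂| ≤ 1, then |a₂| ≤ 2t√(2t) and |a₃| ≤ 4t² + t. -/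
theorem stmt_15 (t : ℝ) (ht : t ∈ Set.Ioo (0 : ℝ) 1)
    (a₂ a₃ c₁ c₂ d₁ d₂ : ℂ)
    (hc₁ : ‖c₁‖ ≤ 1) (hc₂ : ‖c₂‖ ≤ 1) (hd₁ : ‖d₁‖ ≤ 1) (hd₂ : ‖d₂‖ ≤ 1)
    (e1 : a₂ = (2 * t : ℝ) * c₁)
    (e2 : -a₂ ^ 2 + 2 * a₃ = (2 * t : ℝ) * c₂ + ((4 * t ^ 2 - 1 : ℝ) : ℂ) * c₁ ^ 2)
    (e3 : -a₂ = (2 * t : ℝ) * d₁)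
    (e4 : 3 * a₂ ^ 2 - 2 * a₃ = (2 * t : ℝ) * d₂ + ((4 * t ^ 2 - 1 : ℝ) : ℂ) * d₁ ^ 2) :
    ‖a₂‖ ≤ 2 * t * Real.sqrt (2 * t) ∧ ‖a₃‖ ≤ 4 * t ^ 2 + t := by
  obtain ⟨ht0, ht1⟩ := ht
  have h2t : ((2 * t : ℝ) : ℂ) ≠ 0 := by
    simp only [ne_eq, Complex.ofReal_eq_zero]
    positivity
  -- d₁ = -c₁
  have hd : d₁ = -c₁ := by
    have h : ((2 * t : ℝ) : ℂ) * d₁ = ((2 * t : ℝ) : ℂ) * (-c₁) := by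
      rw [← e3, e1]; ring
    exact mul_left_cancel₀ h2t h
  have hsq : a₂ ^ 2 = ((4 * t ^ 2 : ℝ) : ℂ) * c₁ ^ 2 := by
    rw [e1]; push_cast; ring
  have hdc : d₁ ^ 2 = c₁ ^ 2 := by rw [hd]; ring
  -- a₂ ^ 2 = 4 t^3 (c₂ + d₂)
  have ha2 : a₂ ^ 2 = ((4 * t ^ 3 : ℝ) : ℂ) * (c₂ + d₂) := by
    have key : c₁ ^ 2 = (t : ℝ) * (c₂ + d₂) := by
      have comb : ((2 : ℝ) : ℂ) * c₁ ^ 2 = ((2 : ℝ) : ℂ) * ((t : ℝ) * (c₂ + d₂)) := by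
        linear_combination (norm := (push_cast; ring)) e2 + e4 - 2 * hsq +
          (4 * (t:ℂ) ^ 2 - 1) * hdc
      have h2 : ((2 : ℝ) : ℂ) ≠ 0 := by norm_num
      exact mul_left_cancel₀ h2 comb
    rw [hsq, key]; push_cast; ring
  -- a₃ formula
  have ha3 : a₃ = ((t / 2 : ℝ) : ℂ) * (c₂ - d₂) + ((4 * t ^ 2 : ℝ) : ℂ) * c₁ ^ 2 := by
    have comb : ((4 : ℝ) : ℂ) * a₃ =
        ((4 : ℝ) : ℂ) * (((t / 2 : ℝ) : ℂ) * (c₂ - d₂) + ((4 * t ^ 2 : ℝ) : ℂ) * c₁ ^ 2) := by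
      linear_combination (norm := (push_cast; ring)) e2 - e4 + 4 * hsq -
        (4 * (t:ℂ) ^ 2 - 1) * hdc
    have h4 : ((4 : ℝ) : ℂ) ≠ 0 := by norm_num
    exact mul_left_cancel₀ h4 comb
  constructor
  · have hb : ‖a₂‖ ^ 2 ≤ 8 * t ^ 3 := by
      have : ‖a₂‖ ^ 2 = (4 * t ^ 3) * ‖c₂ + d₂‖ := by
        rw [← norm_pow, ha2, norm_mul, Complex.norm_real, Real.norm_eq_abs,
          abs_of_pos (by positivity : (0:ℝ) < 4 * t ^ 3)]
      rw [this]
      have h1 : ‖c₂ + d₂‖ ≤ 2 := le_trans (norm_add_le _ _) (by linarith)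
      nlinarith [mul_le_mul_of_nonneg_left h1 (by positivity : (0:ℝ) ≤ 4 * t ^ 3)]
    have hb2 : ‖a₂‖ ^ 2 ≤ (2 * t * Real.sqrt (2 * t)) ^ 2 := by
      have : (2 * t * Real.sqrt (2 * t)) ^ 2 = 8 * t ^ 3 := by
        rw [mul_pow, mul_pow, Real.sq_sqrt (by linarith)]
        ring
      linarith
    have := Real.sqrt_le_sqrt hb2
    rwa [Real.sqrt_sq (norm_nonneg _), Real.sqrt_sq (by positivity)] at this
  · rw [ha3]
    calc ‖((t / 2 : ℝ) : ℂ) * (c₂ - d₂) + ((4 * t ^ 2 : ℝ) : ℂ) * c₁ ^ 2‖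
        ≤ ‖((t / 2 : ℝ) : ℂ) * (c₂ - d₂)‖ + ‖((4 * t ^ 2 : ℝ) : ℂ) * c₁ ^ 2‖ :=
          norm_add_le _ _
      _ = (t / 2) * ‖c₂ - d₂‖ + (4 * t ^ 2) * ‖c₁‖ ^ 2 := by
          rw [norm_mul, norm_mul, norm_pow, Complex.norm_real, Complex.norm_real,
            Real.norm_eq_abs, Real.norm_eq_abs,
            abs_of_pos (by positivity : (0:ℝ) < t / 2),
            abs_of_pos (by positivity : (0:ℝ) < 4 * t ^ 2)]
      _ ≤ (t / 2) * 2 + (4 * t ^ 2) * 1 := by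
          have h1 : ‖c₂ - d₂‖ ≤ 2 := le_trans (norm_sub_le _ _) (by linarith)
          have h2 : ‖c₁‖ ^ 2 ≤ 1 := by nlinarith [norm_nonneg c₁]
          have := sq_nonneg t
          nlinarith
      _ = 4 * t ^ 2 + t := by ring
end

section
/- Specializing α = 1/2 and λ = 1 (so Ψ₂ = 1, Ψ₃ = 1): if t ∈ (0,1) with t ≠ 1/√2, and a₂, a₃ ∈ ℂ satisfy 2a₂ = 2t·c₁, −4a₂² + 6a₃ = 2t·c₂ + (4t²−1)c₁², −2a₂ = 2t·d₁, and 8a₂² − 6a₃ = 2t·d₂ + (4t²−1)d₁² with |c₁|,|c₂|,|d₁|,|d₂| ≤ 1, then |a₂| ≤ 2t√(2t)/√(|4 − 8t²|) and |a₃| ≤ t² + t/3. -/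
theorem stmt_16 (t : ℝ) (ht : t ∈ Set.Ioo (0 : ℝ) 1) (ht2 : t ≠ 1 / Real.sqrt 2)
    (a₂ a₃ c₁ c₂ d₁ d₂ : ℂ)
    (hc₁ : ‖c₁‖ ≤ 1) (hc₂ : ‖c₂‖ ≤ 1) (hd₁ : ‖d₁‖ ≤ 1) (hd₂ : ‖d₂‖ ≤ 1)
    (e1 : 2 * a₂ = (2 * t : ℝ) * c₁)
    (e2 : -4 * a₂ ^ 2 + 6 * a₃ = (2 * t : ℝ) * c₂ + ((4 * t ^ 2 - 1 : ℝ) : ℂ) * c₁ ^ 2)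
    (e3 : -2 * a₂ = (2 * t : ℝ) * d₁)
    (e4 : 8 * a₂ ^ 2 - 6 * a₃ = (2 * t : ℝ) * d₂ + ((4 * t ^ 2 - 1 : ℝ) : ℂ) * d₁ ^ 2) :
    ‖a₂‖ ≤ 2 * t * Real.sqrt (2 * t) / Real.sqrt |4 - 8 * t ^ 2| ∧
      ‖a₃‖ ≤ t ^ 2 + t / 3 := by
  obtain ⟨ht0, ht1⟩ := ht
  have ht0' : (t : ℂ) ≠ 0 := by exact_mod_cast ne_of_gt ht0
  push_cast at e1 e2 e3 e4
  have hc : (t : ℂ) * c₁ = a₂ := by linear_combination -e1 / 2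
  have hd : (t : ℂ) * d₁ = -a₂ := by linear_combination -e3 / 2
  -- key identity for a₂
  have key : a₂ ^ 2 * (2 - 4 * (t : ℂ) ^ 2) = 2 * (t : ℂ) ^ 3 * (c₂ + d₂) := by
    linear_combination (t:ℂ)^2 * e2 + (t:ℂ)^2 * e4
      + (4*(t:ℂ)^2 - 1) * ((t:ℂ)*c₁ + a₂) * hc
      + (4*(t:ℂ)^2 - 1) * ((t:ℂ)*d₁ - a₂) * hd
  -- key identity for a₃
  have key2t : (t:ℂ)^2 * (6 * a₃) = (t:ℂ)^2 * ((t:ℂ) * (c₂ - d₂) + 6 * a₂ ^ 2) := by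
    linear_combination ((t:ℂ)^2/2) * e2 - ((t:ℂ)^2/2) * e4
      + ((4*(t:ℂ)^2 - 1)/2) * ((t:ℂ)*c₁ + a₂) * hc
      - ((4*(t:ℂ)^2 - 1)/2) * ((t:ℂ)*d₁ - a₂) * hd
  have key2 : 6 * a₃ = (t:ℂ) * (c₂ - d₂) + 6 * a₂ ^ 2 :=
    mul_left_cancel₀ (pow_ne_zero 2 ht0') key2t
  have hta : |t| = t := abs_of_pos ht0
  have ha2t : ‖a₂‖ ≤ t := by
    rw [← hc, norm_mul, Complex.norm_real, Real.norm_eq_abs, hta]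
    nlinarith [ht0]
  -- D := |2 - 4 t^2| > 0
  have hDne : (2 - 4 * t ^ 2) ≠ 0 := by
    intro h
    apply ht2
    have h2 : t ^ 2 = 1 / 2 := by linarith
    rw [eq_div_iff (by positivity : Real.sqrt 2 ≠ 0)]
    nlinarith [Real.sq_sqrt (by norm_num : (2:ℝ) ≥ 0), Real.sqrt_nonneg 2, ht0]
  have hD : 0 < |2 - 4 * t ^ 2| := abs_pos.mpr hDne
  -- norm bound for a₂²
  have hn : ‖a₂‖ ^ 2 * |2 - 4 * t ^ 2| ≤ 4 * t ^ 3 := by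
    have := congrArg norm key
    rw [norm_mul, norm_pow, norm_mul, norm_mul] at this
    have h24 : ‖(2 : ℂ) - 4 * (t:ℂ)^2‖ = |2 - 4 * t ^ 2| := by
      rw [show (2 : ℂ) - 4 * (t:ℂ)^2 = ((2 - 4 * t ^ 2 : ℝ) : ℂ) by push_cast; ring,
        Complex.norm_real, Real.norm_eq_abs]
    rw [h24] at this
    have h2 : ‖(2:ℂ)‖ = 2 := by norm_num
    have h3 : ‖(t:ℂ)^3‖ = t ^ 3 := by
      rw [norm_pow, Complex.norm_real, Real.norm_eq_abs, hta]
    rw [h2, h3] at this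
    have hcd : ‖c₂ + d₂‖ ≤ 2 := le_trans (norm_add_le _ _) (by linarith)
    rw [this]
    nlinarith [pow_pos ht0 3]
  constructor
  · -- a₂ bound
    set R := 2 * t * Real.sqrt (2 * t) / Real.sqrt |4 - 8 * t ^ 2| with hR
    have hRnn : 0 ≤ R := by positivity
    have hRsq : R ^ 2 = 4 * t ^ 3 / |2 - 4 * t ^ 2| := by
      rw [hR, div_pow, mul_pow, mul_pow, Real.sq_sqrt (by positivity : (0:ℝ) ≤ 2 * t),
        Real.sq_sqrt (abs_nonneg _),
        show |4 - 8 * t ^ 2| = 2 * |2 - 4 * t ^ 2| by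
          rw [show (4 - 8 * t ^ 2 : ℝ) = 2 * (2 - 4 * t ^ 2) by ring, abs_mul]; norm_num]
      field_simp
      ring
    have hsq : ‖a₂‖ ^ 2 ≤ R ^ 2 := by
      rw [hRsq, le_div_iff₀ hD]
      exact hn
    calc ‖a₂‖ = Real.sqrt (‖a₂‖ ^ 2) := by rw [Real.sqrt_sq (norm_nonneg _)]
      _ ≤ Real.sqrt (R ^ 2) := Real.sqrt_le_sqrt hsq
      _ = R := Real.sqrt_sq hRnn
  · -- a₃ bound
    have := congrArg norm key2
    rw [norm_mul] at this
    have h6 : ‖(6:ℂ)‖ = 6 := by norm_num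
    rw [h6] at this
    have hcd : ‖(t:ℂ) * (c₂ - d₂) + 6 * a₂ ^ 2‖ ≤ t * 2 + 6 * t ^ 2 := by
      refine le_trans (norm_add_le _ _) ?_
      gcongr
      · rw [norm_mul, Complex.norm_real, Real.norm_eq_abs, hta]
        have : ‖c₂ - d₂‖ ≤ 2 := le_trans (norm_sub_le _ _) (by linarith)
        nlinarith
      · rw [norm_mul, norm_pow, h6]
        nlinarith [norm_nonneg a₂]
    linarith [this, hcd]
end
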